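/- arXiv:1706.08368 — 5 statements merged into one kernel-verified Lean document; each statement's English description precedes it below -/
import Mathlib

section
/- Let H be a real Hilbert space, λ ∈ ℝ, and Φ : H → (-∞, ∞] a λ-convex function (i.e., Φ - (λ/2)‖·‖² is convex). Then the descending slope of Φ at v, defined as limsup_{w→v} (Φ(v)-Φ(w))⁺/‖v-w‖, equals sup_{w ≠ v} ((Φ(v)-Φ(w))/‖v-w‖ + (λ/2)‖v-w‖)⁺. -/
open Filter Set
open scoped ENNReal RealInnerProductSpace

/-- Positive part of an extended real, as an element of `[0,∞]`. -/
noncomputable def erealPos (x : EReal) : ℝ≥0∞ :=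
  if x = ⊤ then ⊤ else ENNReal.ofReal x.toReal

/-- The descending slope `|∂Φ|(v) = limsup_{w→v} (Φ(v)-Φ(w))⁺ / ‖v-w‖`. -/
noncomputable def descSlope {H : Type*} [NormedAddCommGroup H]
    (Φ : H → EReal) (v : H) : ℝ≥0∞ :=
  Filter.limsup (fun w => erealPos (Φ v - Φ w) / ENNReal.ofReal ‖v - w‖)
    (nhdsWithin v {v}ᶜ)

/-- `Φ` is `λ`-convex: `Φ - (λ/2)‖·‖²` is convex, equivalently
`Φ(tu+(1-t)v) ≤ tΦ(u)+(1-t)Φ(v) - (λ/2)t(1-t)‖u-v‖²`. -/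
def LambdaConvex {H : Type*} [NormedAddCommGroup H] [NormedSpace ℝ H]
    (lam : ℝ) (Φ : H → EReal) : Prop :=
  ∀ u v : H, ∀ t : ℝ, 0 ≤ t → t ≤ 1 →
    Φ (t • u + (1 - t) • v) ≤
      (t : EReal) * Φ u + ((1 - t : ℝ) : EReal) * Φ v
        - ((lam / 2 * t * (1 - t) * ‖u - v‖ ^ 2 : ℝ) : EReal)

lemma erealPos_of_ne_top {x : EReal} (h : x ≠ ⊤) :
    erealPos x = ENNReal.ofReal x.toReal := if_neg h

lemma erealPos_coe (x : ℝ) : erealPos (x : EReal) = ENNReal.ofReal x := by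
  rw [erealPos_of_ne_top (by simp)]; simp

lemma erealPos_bot : erealPos (⊥ : EReal) = 0 := by
  rw [erealPos_of_ne_top (by simp)]; simp

/-- Representation of the descending slope of a `λ`-convex function on a Hilbert space:
`|∂Φ|(v) = sup_{w ≠ v} ((Φ(v)-Φ(w))/‖v-w‖ + (λ/2)‖v-w‖)⁺`. -/
theorem descSlope_eq_sup_of_lambdaConvex
    {H : Type*} [NormedAddCommGroup H] [InnerProductSpace ℝ H] [CompleteSpace H]
    (lam : ℝ) (Φ : H → EReal) (hbot : ∀ w, Φ w ≠ ⊥)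
    (hconv : LambdaConvex lam Φ) (v : H) (hfin : Φ v < ⊤) :
    descSlope Φ v =
      ⨆ (w : H) (_ : w ≠ v),
        erealPos ((Φ v - Φ w) * ((‖v - w‖⁻¹ : ℝ) : EReal)
          + ((lam / 2 * ‖v - w‖ : ℝ) : EReal)) := by
  set a : ℝ := (Φ v).toReal with ha
  have hva : Φ v = (a : EReal) := (EReal.coe_toReal hfin.ne (hbot v)).symm
  set f : H → ℝ≥0∞ := fun w => erealPos (Φ v - Φ w) / ENNReal.ofReal ‖v - w‖ with hfdef
  set g : H → ℝ≥0∞ := fun w => erealPos ((Φ v - Φ w) * ((‖v - w‖⁻¹ : ℝ) : EReal)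
          + ((lam / 2 * ‖v - w‖ : ℝ) : EReal)) with hgdef
  -- computations of `f` and `g` at points where `Φ` is finite
  have hfw : ∀ w : H, w ≠ v → Φ w ≠ ⊤ →
      f w = ENNReal.ofReal ((a - (Φ w).toReal) / ‖v - w‖) := by
    intro w hw hwt
    have hr : (0:ℝ) < ‖v - w‖ := by
      rw [norm_pos_iff, sub_ne_zero]; exact (Ne.symm hw)
    have hwb : Φ w = ((Φ w).toReal : EReal) := (EReal.coe_toReal hwt (hbot w)).symm
    have hsub : Φ v - Φ w = ((a - (Φ w).toReal : ℝ) : EReal) := by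
      conv_lhs => rw [hva, hwb]
      exact (EReal.coe_sub _ _).symm
    simp only [hfdef, hsub, erealPos_coe]
    rw [ENNReal.ofReal_div_of_pos hr]
  have hgw : ∀ w : H, Φ w ≠ ⊤ →
      g w = ENNReal.ofReal ((a - (Φ w).toReal) * ‖v - w‖⁻¹ + lam / 2 * ‖v - w‖) := by
    intro w hwt
    have hwb : Φ w = ((Φ w).toReal : EReal) := (EReal.coe_toReal hwt (hbot w)).symm
    have hsub : Φ v - Φ w = ((a - (Φ w).toReal : ℝ) : EReal) := by
      conv_lhs => rw [hva, hwb]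
      exact (EReal.coe_sub _ _).symm
    simp only [hgdef, hsub]
    rw [← EReal.coe_mul, ← EReal.coe_add, erealPos_coe]
  have hftop : ∀ w : H, Φ w = ⊤ → f w = 0 := by
    intro w hwt
    have hsub : Φ v - Φ w = (⊥ : EReal) := by
      rw [hva, hwt]; exact EReal.sub_top _
    simp only [hfdef, hsub, erealPos_bot, ENNReal.zero_div]
  apply le_antisymm
  · -- limsup ≤ sup
    rw [descSlope]
    apply ENNReal.le_of_forall_pos_le_add
    intro ε hε _
    refine limsup_le_of_le (by isBoundedDefault) ?_
    have hδpos : (0:ℝ) < (ε : ℝ) / (|lam| / 2 + 1) := by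
      apply div_pos (by exact_mod_cast hε) (by positivity)
    set δ : ℝ := (ε : ℝ) / (|lam| / 2 + 1) with hδ
    have hball : ∀ᶠ w in nhdsWithin v {v}ᶜ, dist w v < δ :=
      eventually_nhdsWithin_of_eventually_nhds
        (Metric.eventually_nhds_iff.mpr ⟨δ, hδpos, fun y hy => hy⟩)
    filter_upwards [hball, self_mem_nhdsWithin] with w hwδ hwv
    have hwv' : w ≠ v := hwv
    show f w ≤ (⨆ (w : H) (_ : w ≠ v), g w) + (ε : ℝ≥0∞)
    by_cases hwt : Φ w = ⊤
    · rw [hftop w hwt]; exact zero_le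
    · set r : ℝ := ‖v - w‖ with hrdef
      have hr : (0:ℝ) < r := by
        rw [hrdef, norm_pos_iff, sub_ne_zero]; exact (Ne.symm hwv')
      have hrδ : r < δ := by
        rw [hrdef, ← dist_eq_norm, dist_comm]; exact hwδ
      set b : ℝ := (Φ w).toReal with hb
      have key : (a - b) / r ≤ ((a - b) * r⁻¹ + lam / 2 * r) + |lam| / 2 * r := by
        rw [div_eq_mul_inv]
        have h0 : 0 ≤ (lam + |lam|) / 2 * r :=
          mul_nonneg (by have := neg_abs_le lam; linarith) hr.le
        nlinarith [h0]
      have hεbound : ENNReal.ofReal (|lam| / 2 * r) ≤ (ε : ℝ≥0∞) := by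
        rw [← ENNReal.ofReal_coe_nnreal]
        apply ENNReal.ofReal_le_ofReal
        have h1 : |lam| / 2 * r ≤ |lam| / 2 * δ :=
          mul_le_mul_of_nonneg_left hrδ.le (by positivity)
        have h2 : |lam| / 2 * δ ≤ (ε : ℝ) := by
          rw [hδ]
          rw [mul_div_assoc', div_le_iff₀ (by positivity)]
          nlinarith [abs_nonneg lam, (show (0:ℝ) < (ε:ℝ) by exact_mod_cast hε)]
        linarith
      calc f w = ENNReal.ofReal ((a - b) / r) := hfw w hwv' hwt
        _ ≤ ENNReal.ofReal (((a - b) * r⁻¹ + lam / 2 * r) + |lam| / 2 * r) :=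
            ENNReal.ofReal_le_ofReal key
        _ ≤ ENNReal.ofReal ((a - b) * r⁻¹ + lam / 2 * r) + ENNReal.ofReal (|lam| / 2 * r) :=
            ENNReal.ofReal_add_le
        _ = g w + ENNReal.ofReal (|lam| / 2 * r) := by rw [hgw w hwt]
        _ ≤ (⨆ (w : H) (_ : w ≠ v), g w) + (ε : ℝ≥0∞) :=
            add_le_add (le_iSup₂ (f := fun w _ => g w) w hwv') hεbound
  · -- sup ≤ limsup
    refine iSup₂_le fun w hw => ?_
    have hr : (0:ℝ) < ‖v - w‖ := by
      rw [norm_pos_iff, sub_ne_zero]; exact (Ne.symm hw)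
    by_cases hwt : Φ w = ⊤
    · have hsub : Φ v - Φ w = (⊥ : EReal) := by
        rw [hva, hwt]; exact EReal.sub_top _
      have : g w = 0 := by
        simp only [hgdef, hsub]
        rw [EReal.bot_mul_of_pos (by exact_mod_cast inv_pos.mpr hr), EReal.bot_add,
          erealPos_bot]
      rw [show (erealPos ((Φ v - Φ w) * ((‖v - w‖⁻¹ : ℝ) : EReal)
          + ((lam / 2 * ‖v - w‖ : ℝ) : EReal))) = g w from rfl, this]
      exact zero_le
    · set r : ℝ := ‖v - w‖ with hrdef
      set b : ℝ := (Φ w).toReal with hb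
      set q : ℝ := (a - b) * r⁻¹ + lam / 2 * r with hq
      have hgq : g w = ENNReal.ofReal q := hgw w hwt
      set c : ℝ → H := fun t => t • w + (1 - t) • v with hc
      have hcv : ∀ t : ℝ, v - c t = t • (v - w) := by
        intro t; simp only [hc]; module
      have hcnorm : ∀ t : ℝ, 0 < t → ‖v - c t‖ = t * r := by
        intro t ht
        rw [hcv t, norm_smul, Real.norm_eq_abs, abs_of_pos ht, hrdef]
      have hctend : Tendsto c (nhdsWithin 0 (Ioi 0)) (nhdsWithin v {v}ᶜ) := by
        rw [tendsto_nhdsWithin_iff]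
        constructor
        · have hcont : Continuous c := by
            simp only [hc]; fun_prop
          have h0 : c 0 = v := by simp [hc]
          have h2 := (hcont.tendsto 0).mono_left
            (nhdsWithin_le_nhds (s := Ioi (0:ℝ)))
          rwa [h0] at h2
        · filter_upwards [self_mem_nhdsWithin] with t ht
          simp only [mem_compl_iff, mem_singleton_iff]
          intro hctv
          have : v - c t = 0 := by rw [hctv, sub_self]
          rw [hcv t] at this
          have : t • (v - w) ≠ 0 :=
            smul_ne_zero (ne_of_gt ht) (sub_ne_zero.mpr (Ne.symm hw))
          exact this ‹t • (v - w) = 0›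
      have hev : ∀ᶠ t in nhdsWithin 0 (Ioi 0),
          ENNReal.ofReal (q - lam / 2 * t * r) ≤ f (c t) := by
        have h1 : ∀ᶠ t : ℝ in nhdsWithin 0 (Ioi 0), t < 1 :=
          eventually_nhdsWithin_of_eventually_nhds (gt_mem_nhds (by norm_num))
        filter_upwards [h1, self_mem_nhdsWithin] with t ht1 ht0
        have ht0' : (0:ℝ) < t := ht0
        -- convexity bound
        have hwb : Φ w = (b : EReal) := (EReal.coe_toReal hwt (hbot w)).symm
        have hK := hconv w v t ht0'.le ht1.le
        rw [hwb, hva] at hK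
        have hwvr : ‖w - v‖ = r := by rw [norm_sub_rev]
        rw [hwvr] at hK
        set K : ℝ := t * b + (1 - t) * a - lam / 2 * t * (1 - t) * r ^ 2 with hKdef
        have hK' : Φ (c t) ≤ (K : EReal) := by
          refine le_trans hK (le_of_eq ?_)
          rw [hKdef]; push_cast; ring
        have hcttop : Φ (c t) ≠ ⊤ := (lt_of_le_of_lt hK' (EReal.coe_lt_top K)).ne
        set bt : ℝ := (Φ (c t)).toReal with hbt
        have hbtK : bt ≤ K := by
          have := EReal.toReal_le_toReal hK' (hbot _) (EReal.coe_ne_top K)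
          rwa [EReal.toReal_coe] at this
        have hfct : f (c t) = ENNReal.ofReal ((a - bt) / (t * r)) := by
          have hctv : c t ≠ v := by
            intro hctv
            have h2 : v - c t = 0 := by rw [hctv, sub_self]
            rw [hcv t] at h2
            exact smul_ne_zero (ne_of_gt ht0') (sub_ne_zero.mpr (Ne.symm hw)) h2
          rw [hfw (c t) hctv hcttop, hcnorm t ht0']
        rw [hfct]
        apply ENNReal.ofReal_le_ofReal
        rw [le_div_iff₀ (by positivity)]
        have hexp : (q - lam / 2 * t * r) * (t * r)
            = t * (a - b) + lam / 2 * t * (1 - t) * r ^ 2 := by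
          rw [hq]; field_simp; ring
        rw [hexp]
        have hKa : a - K = t * (a - b) + lam / 2 * t * (1 - t) * r ^ 2 := by
          rw [hKdef]; ring
        rw [← hKa]
        exact sub_le_sub_left hbtK a
      have hlim : Tendsto (fun t : ℝ => ENNReal.ofReal (q - lam / 2 * t * r))
          (nhdsWithin 0 (Ioi 0)) (nhds (ENNReal.ofReal q)) := by
        have hcont : Continuous (fun t : ℝ => ENNReal.ofReal (q - lam / 2 * t * r)) := by
          apply ENNReal.continuous_ofReal.comp; fun_prop
        have h2 := (hcont.tendsto 0).mono_left
          (nhdsWithin_le_nhds (s := Ioi (0:ℝ)))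
        simpa using h2
      calc (erealPos ((Φ v - Φ w) * ((‖v - w‖⁻¹ : ℝ) : EReal)
              + ((lam / 2 * ‖v - w‖ : ℝ) : EReal))) = g w := rfl
        _ = ENNReal.ofReal q := hgq
        _ = liminf (fun t : ℝ => ENNReal.ofReal (q - lam / 2 * t * r))
              (nhdsWithin 0 (Ioi 0)) := (hlim.liminf_eq).symm
        _ ≤ liminf (f ∘ c) (nhdsWithin 0 (Ioi 0)) := liminf_le_liminf hev
        _ ≤ limsup (f ∘ c) (nhdsWithin 0 (Ioi 0)) := liminf_le_limsup
        _ = limsup f (map c (nhdsWithin 0 (Ioi 0))) := rfl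
        _ ≤ limsup f (nhdsWithin v {v}ᶜ) := limsup_le_limsup_of_le hctend
        _ = descSlope Φ v := rfl
end

section
/- Let σᵢ : L²(mᵢ) → L²(m) be the linear isometries σᵢ(w) = w ∘ Sᵢ induced by almost-optimal transport maps Sᵢ : X → Xᵢ pushing m to mᵢ with ∫ min(1,ρ(x,Sᵢx))² dm → 0. If fᵢ ∈ L²(mᵢ) with sup_i ‖fᵢ‖_{L²(mᵢ)} < ∞ and f ∈ L²(m), then fᵢ converges L²-weakly to f if and only if σᵢ(fᵢ) → f weakly in L²(m). -/
open Filter Set MeasureTheory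
open scoped ENNReal

section aux
variable {α : Type*} [MeasurableSpace α] {μ : Measure α}

lemma aux_mul_integrable {u v : α → ℝ} (hu : MemLp u 2 μ) (hv : MemLp v 2 μ) :
    Integrable (fun x => u x * v x) μ := by
  have h : MemLp (u • v) 1 μ := by
    haveI : ENNReal.HolderTriple 2 2 1 := ⟨by rw [inv_one]; exact ENNReal.inv_two_add_inv_two⟩
    exact MemLp.smul hv hu
  exact memLp_one_iff_integrable.mp h

lemma aux_cauchy_schwarz {u v : α → ℝ} (hu : MemLp u 2 μ) (hv : MemLp v 2 μ) :
    |∫ x, u x * v x ∂μ| ≤ (eLpNorm u 2 μ).toReal * (eLpNorm v 2 μ).toReal := by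
  have h2 : (2:ℝ).HolderConjugate 2 := by constructor <;> norm_num
  have hofReal : (ENNReal.ofReal (2:ℝ)) = 2 := by norm_num
  have hu' : MemLp u (ENNReal.ofReal (2:ℝ)) μ := by rwa [hofReal]
  have hv' : MemLp v (ENNReal.ofReal (2:ℝ)) μ := by rwa [hofReal]
  have key := integral_mul_norm_le_Lp_mul_Lq h2 hu' hv'
  have h1 : |∫ x, u x * v x ∂μ| ≤ ∫ x, ‖u x‖ * ‖v x‖ ∂μ := by
    have := norm_integral_le_integral_norm (μ := μ) (fun x => u x * v x)
    simpa [Real.norm_eq_abs, abs_mul] using this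
  refine h1.trans (key.trans_eq ?_)
  rw [hu.eLpNorm_eq_integral_rpow_norm (by norm_num) (by norm_num),
      hv.eLpNorm_eq_integral_rpow_norm (by norm_num) (by norm_num),
      ENNReal.toReal_ofReal (Real.rpow_nonneg (integral_nonneg fun x => by positivity) _),
      ENNReal.toReal_ofReal (Real.rpow_nonneg (integral_nonneg fun x => by positivity) _)]
  norm_num

lemma aux_eLpNorm_tendsto {d : ℕ → α → ℝ} (hd : ∀ i, MemLp (d i) 2 μ)
    (h : Tendsto (fun i => ∫ x, (d i x) ^ 2 ∂μ) atTop (nhds 0)) :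
    Tendsto (fun i => (eLpNorm (d i) 2 μ).toReal) atTop (nhds 0) := by
  have heq : ∀ i, (eLpNorm (d i) 2 μ).toReal = (∫ x, (d i x) ^ 2 ∂μ) ^ ((2:ℝ)⁻¹) := by
    intro i
    rw [(hd i).eLpNorm_eq_integral_rpow_norm (by norm_num) (by norm_num),
        ENNReal.toReal_ofReal (Real.rpow_nonneg (integral_nonneg fun x => by positivity) _)]
    norm_num
  simp only [heq]
  simpa [Real.zero_rpow (by norm_num : ((2:ℝ)⁻¹) ≠ 0)] using
    h.rpow_const (Or.inr (by norm_num : (0:ℝ) ≤ 2⁻¹))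

end aux

lemma aux_sq_diff_tendsto {Z : Type*} [MetricSpace Z] [TopologicalSpace.SeparableSpace Z]
    [MeasurableSpace Z] [BorelSpace Z]
    (m : Measure Z) [IsProbabilityMeasure m] (S : ℕ → Z → Z) (hSmeas : ∀ i, Measurable (S i))
    (hScost : Tendsto (fun i => ∫ x, (min 1 (dist x (S i x))) ^ 2 ∂m) atTop (nhds 0))
    (ξ : BoundedContinuousFunction Z ℝ) :
    Tendsto (fun i => ∫ x, (ξ (S i x) - ξ x) ^ 2 ∂m) atTop (nhds 0) := by
  haveI : SecondCountableTopology Z := UniformSpace.secondCountable_of_separable Z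
  set h : ℕ → Z → ℝ := fun i x => min 1 (dist x (S i x)) with hh
  have hmeas : ∀ i, Measurable (h i) := fun i =>
    measurable_const.min (measurable_id.dist (hSmeas i))
  have hnn : ∀ i x, 0 ≤ h i x := fun i x => le_min zero_le_one dist_nonneg
  have hle1 : ∀ i x, h i x ≤ 1 := fun i x => min_le_left _ _
  have hint : ∀ i, Integrable (fun x => (h i x) ^ 2) m := by
    intro i
    refine (integrable_const (1:ℝ)).mono' (((hmeas i).pow_const 2).aestronglyMeasurable)
      (ae_of_all _ fun x => ?_)
    rw [Real.norm_eq_abs, abs_of_nonneg (by positivity)]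
    calc (h i x) ^ 2 ≤ 1 ^ 2 := pow_le_pow_left₀ (hnn i x) (hle1 i x) 2
      _ = 1 := one_pow 2
  have hTIM : TendstoInMeasure m h atTop (fun _ => (0:ℝ)) := by
    rw [tendstoInMeasure_iff_dist]
    intro ε hε
    have hsub : ∀ i, {x | ε ≤ dist (h i x) 0} ⊆ {x | ε ^ 2 ≤ (h i x) ^ 2} := by
      intro i x hx
      simp only [mem_setOf_eq, Real.dist_eq, sub_zero, abs_of_nonneg (hnn i x)] at hx
      exact pow_le_pow_left₀ hε.le hx 2
    have hmarkov : ∀ i, (m {x | ε ≤ dist (h i x) 0}).toReal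
        ≤ (ε ^ 2)⁻¹ * ∫ x, (h i x) ^ 2 ∂m := by
      intro i
      have h1 := mul_meas_ge_le_integral_of_nonneg
        (ae_of_all m fun x => (by positivity : (0:ℝ) ≤ (h i x) ^ 2)) (hint i) (ε ^ 2)
      have h2 : (m {x | ε ≤ dist (h i x) 0}).toReal ≤ (m {x | ε ^ 2 ≤ (h i x) ^ 2}).toReal :=
        ENNReal.toReal_mono (measure_ne_top _ _) (measure_mono (hsub i))
      have hε2 : (0:ℝ) < ε ^ 2 := by positivity
      rw [← le_div_iff₀' hε2] at h1
      exact h2.trans (h1.trans_eq (div_eq_inv_mul _ _))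
    have htoReal : Tendsto (fun i => (m {x | ε ≤ dist (h i x) 0}).toReal) atTop (nhds 0) := by
      refine squeeze_zero (fun i => ENNReal.toReal_nonneg) hmarkov ?_
      simpa using hScost.const_mul ((ε ^ 2)⁻¹)
    exact (ENNReal.tendsto_toReal_iff (fun i => measure_ne_top _ _) (by simp)).mp
      (by simpa using htoReal)
  refine tendsto_of_subseq_tendsto fun ns hns => ?_
  have hTIM' : TendstoInMeasure m (fun k => h (ns k)) atTop (fun _ => (0:ℝ)) :=
    fun ε hε => (hTIM ε hε).comp hns
  obtain ⟨ms, hms_mono, hae⟩ := hTIM'.exists_seq_tendsto_ae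
  refine ⟨ms, ?_⟩
  have hdom := tendsto_integral_of_dominated_convergence (μ := m)
    (F := fun k x => (ξ (S (ns (ms k)) x) - ξ x) ^ 2) (f := fun _ => (0:ℝ))
    (fun _ => (2 * ‖ξ‖) ^ 2)
    (fun k => (((ξ.continuous.measurable.comp (hSmeas _)).sub ξ.continuous.measurable).pow_const
      2).aestronglyMeasurable)
    (integrable_const _)
    (fun k => ae_of_all _ fun x => by
      rw [Real.norm_eq_abs, abs_of_nonneg (sq_nonneg _)]
      have h1 : |ξ (S (ns (ms k)) x)| ≤ ‖ξ‖ := ξ.norm_coe_le_norm _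
      have h2 : |ξ x| ≤ ‖ξ‖ := ξ.norm_coe_le_norm _
      obtain ⟨h1a, h1b⟩ := abs_le.mp h1
      obtain ⟨h2a, h2b⟩ := abs_le.mp h2
      exact sq_le_sq' (by linarith) (by linarith))
    ?_
  · simpa using hdom
  · filter_upwards [hae] with x hx
    have hev : ∀ᶠ k in atTop, h (ns (ms k)) x < 1 := hx.eventually_lt_const zero_lt_one
    have hd : Tendsto (fun k => dist x (S (ns (ms k)) x)) atTop (nhds 0) := by
      refine hx.congr' ?_
      filter_upwards [hev] with k hk
      have hlt : dist x (S (ns (ms k)) x) < 1 := by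
        by_contra h'
        push_neg at h'
        rw [hh] at hk
        simp only [min_eq_left h'] at hk
        exact absurd hk (lt_irrefl 1)
      exact min_eq_right hlt.le
    have hS : Tendsto (fun k => S (ns (ms k)) x) atTop (nhds x) := by
      rw [tendsto_iff_dist_tendsto_zero]
      simpa [dist_comm] using hd
    have hξx : Tendsto (fun k => ξ (S (ns (ms k)) x)) atTop (nhds (ξ x)) :=
      (ξ.continuous.tendsto x).comp hS
    have h5 : Tendsto (fun k => (ξ (S (ns (ms k)) x) - ξ x) ^ 2) atTop
        (nhds ((ξ x - ξ x) ^ 2)) := (hξx.sub (tendsto_const_nhds (x := ξ x))).pow 2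
    simpa using h5

/-- Transfer of `L²`-weak convergence through the isometries `σᵢ(w) = w ∘ Sᵢ` induced by
almost-optimal transport maps `Sᵢ` pushing `m` to `mᵢ`: for a uniformly `L²`-bounded sequence
`fᵢ ∈ L²(mᵢ)`, `fᵢ → f` `L²`-weakly (i.e. `fᵢmᵢ → fm` in duality with `Cb(Z)`) if and only if
`σᵢ(fᵢ) → f` weakly in `L²(m)`. -/
theorem Lp_weak_convergence_iff_weak_in_L2
    {Z : Type*} [MetricSpace Z] [CompleteSpace Z] [TopologicalSpace.SeparableSpace Z]
    [MeasurableSpace Z] [BorelSpace Z]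
    (μ : ℕ → Measure Z) (m : Measure Z)
    [∀ i, IsProbabilityMeasure (μ i)] [IsProbabilityMeasure m] [NullSingletonClass m]
    (hweak : ∀ ξ : BoundedContinuousFunction Z ℝ,
      Tendsto (fun i => ∫ x, ξ x ∂(μ i)) atTop (nhds (∫ x, ξ x ∂m)))
    (S : ℕ → Z → Z) (hSmeas : ∀ i, Measurable (S i))
    (hSpush : ∀ i, Measure.map (S i) m = μ i)
    (hScost : Tendsto (fun i => ∫ x, (min 1 (dist x (S i x))) ^ 2 ∂m) atTop (nhds 0))
    (f : ℕ → Z → ℝ) (flim : Z → ℝ)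
    (hfi : ∀ i, MemLp (f i) 2 (μ i)) (hflim : MemLp flim 2 m)
    (C : ℝ≥0∞) (hC : C ≠ ⊤) (hbound : ∀ i, eLpNorm (f i) 2 (μ i) ≤ C) :
    (∀ ξ : BoundedContinuousFunction Z ℝ,
        Tendsto (fun i => ∫ x, f i x * ξ x ∂(μ i)) atTop (nhds (∫ x, flim x * ξ x ∂m)))
      ↔
    (∀ g : Z → ℝ, MemLp g 2 m →
        Tendsto (fun i => ∫ x, f i (S i x) * g x ∂m) atTop
          (nhds (∫ x, flim x * g x ∂m))) := by
  have hSae : ∀ i, AEMeasurable (S i) m := fun i => (hSmeas i).aemeasurable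
  have hfiae : ∀ i, AEStronglyMeasurable (f i) (Measure.map (S i) m) := by
    intro i; rw [hSpush i]; exact (hfi i).1
  have hfim : ∀ i, MemLp (fun x => f i (S i x)) 2 m := by
    intro i
    have h1 : MemLp (f i) 2 (Measure.map (S i) m) := by rw [hSpush i]; exact hfi i
    exact (memLp_map_measure_iff (hfiae i) (hSae i)).mp h1
  have hgbound : ∀ i, (eLpNorm (fun x => f i (S i x)) 2 m).toReal ≤ C.toReal := by
    intro i
    refine ENNReal.toReal_mono hC ?_
    have heq : eLpNorm (f i) 2 (μ i) = eLpNorm (fun x => f i (S i x)) 2 m := by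
      rw [← hSpush i, eLpNorm_map_measure (hfiae i) (hSae i)]; rfl
    rw [← heq]; exact hbound i
  have hξS : ∀ (ξ : BoundedContinuousFunction Z ℝ) (i : ℕ),
      MemLp (fun x => ξ (S i x)) 2 m := fun ξ i =>
    MemLp.of_bound ((ξ.continuous.measurable.comp (hSmeas i)).aestronglyMeasurable) ‖ξ‖
      (ae_of_all _ fun x => ξ.norm_coe_le_norm _)
  have hξm : ∀ ξ : BoundedContinuousFunction Z ℝ, MemLp (fun x => ξ x) 2 m := fun ξ =>
    MemLp.of_bound (ξ.continuous.measurable.aestronglyMeasurable) ‖ξ‖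
      (ae_of_all _ fun x => ξ.norm_coe_le_norm _)
  have hdiff : ∀ (ξ : BoundedContinuousFunction Z ℝ) (i : ℕ),
      MemLp (fun x => ξ (S i x) - ξ x) 2 m := fun ξ i => (hξS ξ i).sub (hξm ξ)
  -- error term
  have herr : ∀ ξ : BoundedContinuousFunction Z ℝ,
      Tendsto (fun i => ∫ x, f i (S i x) * (ξ (S i x) - ξ x) ∂m) atTop (nhds 0) := by
    intro ξ
    have hr : Tendsto (fun i => (eLpNorm (fun x => ξ (S i x) - ξ x) 2 m).toReal) atTop
        (nhds 0) := aux_eLpNorm_tendsto (hdiff ξ) (aux_sq_diff_tendsto m S hSmeas hScost ξ)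
    have hb : ∀ i, |∫ x, f i (S i x) * (ξ (S i x) - ξ x) ∂m|
        ≤ C.toReal * (eLpNorm (fun x => ξ (S i x) - ξ x) 2 m).toReal := by
      intro i
      refine (aux_cauchy_schwarz (hfim i) (hdiff ξ i)).trans ?_
      exact mul_le_mul_of_nonneg_right (hgbound i) ENNReal.toReal_nonneg
    refine squeeze_zero_norm (fun i => by simpa [Real.norm_eq_abs] using hb i) ?_
    simpa using hr.const_mul C.toReal
  -- change of variables
  have hchg : ∀ (ξ : BoundedContinuousFunction Z ℝ) (i : ℕ),
      ∫ x, f i x * ξ x ∂(μ i) = ∫ x, f i (S i x) * ξ (S i x) ∂m := by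
    intro ξ i
    have hm : AEStronglyMeasurable (fun y => f i y * ξ y) (Measure.map (S i) m) :=
      (hfiae i).mul ξ.continuous.aestronglyMeasurable
    rw [← hSpush i, integral_map (hSae i) hm]
  -- decomposition
  have hdecomp : ∀ (ξ : BoundedContinuousFunction Z ℝ) (i : ℕ),
      ∫ x, f i (S i x) * ξ (S i x) ∂m
        = (∫ x, f i (S i x) * ξ x ∂m) + ∫ x, f i (S i x) * (ξ (S i x) - ξ x) ∂m := by
    intro ξ i
    rw [← integral_add (aux_mul_integrable (hfim i) (hξm ξ))
      (aux_mul_integrable (hfim i) (hdiff ξ i))]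
    exact integral_congr_ae (ae_of_all _ fun x => by ring)
  constructor
  · intro h1 g hg
    have key : ∀ ξ : BoundedContinuousFunction Z ℝ,
        Tendsto (fun i => ∫ x, f i (S i x) * ξ x ∂m) atTop (nhds (∫ x, flim x * ξ x ∂m)) := by
      intro ξ
      have h2 : Tendsto (fun i => ∫ x, f i (S i x) * ξ (S i x) ∂m) atTop
          (nhds (∫ x, flim x * ξ x ∂m)) := by
        have := h1 ξ
        simp only [hchg ξ] at this
        exact this
      have h3 := h2.sub (herr ξ)
      have h4 : (fun i => (∫ x, f i (S i x) * ξ (S i x) ∂m)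
          - ∫ x, f i (S i x) * (ξ (S i x) - ξ x) ∂m)
          = fun i => ∫ x, f i (S i x) * ξ x ∂m := by
        funext i; rw [hdecomp ξ i]; ring
      rw [h4] at h3
      simpa using h3
    rw [Metric.tendsto_atTop]
    intro ε hε
    set D := C.toReal with hD
    set Dl := (eLpNorm flim 2 m).toReal with hDl
    have hden : (0:ℝ) < D + Dl + 1 := by positivity
    set δ := ε / (2 * (D + Dl + 1)) with hδdef
    have hδ : 0 < δ := by positivity
    obtain ⟨ξ, hξ1, hξ2⟩ := hg.exists_boundedContinuous_eLpNorm_sub_le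
      (by norm_num : (2:ℝ≥0∞) ≠ ∞) (ε := ENNReal.ofReal δ)
      (by simpa using (ENNReal.ofReal_pos.mpr hδ).ne')
    have hgξ : MemLp (fun x => g x - ξ x) 2 m := hg.sub (hξm ξ)
    have hnorm : (eLpNorm (fun x => g x - ξ x) 2 m).toReal ≤ δ := by
      have h5 : eLpNorm (fun x => g x - ξ x) 2 m ≤ ENNReal.ofReal δ := hξ1
      exact (ENNReal.toReal_mono ENNReal.ofReal_ne_top h5).trans
        (ENNReal.toReal_ofReal hδ.le).le
    obtain ⟨N, hN⟩ := (Metric.tendsto_atTop.mp (key ξ)) (ε / 2) (by positivity)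
    refine ⟨N, fun i hi => ?_⟩
    have e1 : ∫ x, f i (S i x) * g x ∂m
        = (∫ x, f i (S i x) * (g x - ξ x) ∂m) + ∫ x, f i (S i x) * ξ x ∂m := by
      rw [← integral_add (aux_mul_integrable (hfim i) hgξ)
        (aux_mul_integrable (hfim i) (hξm ξ))]
      exact integral_congr_ae (ae_of_all _ fun x => by ring)
    have e2 : ∫ x, flim x * g x ∂m
        = (∫ x, flim x * (g x - ξ x) ∂m) + ∫ x, flim x * ξ x ∂m := by
      rw [← integral_add (aux_mul_integrable hflim hgξ) (aux_mul_integrable hflim (hξm ξ))]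
      exact integral_congr_ae (ae_of_all _ fun x => by ring)
    have b1 : |∫ x, f i (S i x) * (g x - ξ x) ∂m| ≤ D * δ :=
      (aux_cauchy_schwarz (hfim i) hgξ).trans
        (mul_le_mul (hgbound i) hnorm ENNReal.toReal_nonneg ENNReal.toReal_nonneg)
    have b2 : |∫ x, flim x * (g x - ξ x) ∂m| ≤ Dl * δ :=
      (aux_cauchy_schwarz hflim hgξ).trans (mul_le_mul_of_nonneg_left hnorm
        ENNReal.toReal_nonneg)
    have b3 : |(∫ x, f i (S i x) * ξ x ∂m) - ∫ x, flim x * ξ x ∂m| < ε / 2 := by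
      have := hN i hi
      rwa [Real.dist_eq] at this
    have hhalf : D * δ + Dl * δ ≤ ε / 2 := by
      have h6 : (D + Dl + 1) * δ = ε / 2 := by
        rw [hδdef]; field_simp
      nlinarith [hδ.le]
    rw [Real.dist_eq, e1, e2]
    have habs : |((∫ x, f i (S i x) * (g x - ξ x) ∂m) + ∫ x, f i (S i x) * ξ x ∂m)
        - ((∫ x, flim x * (g x - ξ x) ∂m) + ∫ x, flim x * ξ x ∂m)|
        ≤ |∫ x, f i (S i x) * (g x - ξ x) ∂m|
          + |(∫ x, f i (S i x) * ξ x ∂m) - ∫ x, flim x * ξ x ∂m|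
          + |∫ x, flim x * (g x - ξ x) ∂m| := by
      set a := ∫ x, f i (S i x) * (g x - ξ x) ∂m
      set b := ∫ x, f i (S i x) * ξ x ∂m
      set a' := ∫ x, flim x * (g x - ξ x) ∂m
      set b' := ∫ x, flim x * ξ x ∂m
      have : (a + b) - (a' + b') = (a + (b - b')) + (-a') := by ring
      rw [this]
      refine (abs_add_le _ _).trans ?_
      rw [abs_neg]
      exact add_le_add_left (abs_add_le _ _) _
    refine habs.trans_lt ?_
    calc |∫ x, f i (S i x) * (g x - ξ x) ∂m|
          + |(∫ x, f i (S i x) * ξ x ∂m) - ∫ x, flim x * ξ x ∂m|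
          + |∫ x, flim x * (g x - ξ x) ∂m|
        < D * δ + ε / 2 + Dl * δ := by linarith [b1, b2, b3]
      _ ≤ ε / 2 + ε / 2 := by linarith
      _ = ε := by ring
  · intro h2 ξ
    have hb : Tendsto (fun i => ∫ x, f i (S i x) * ξ x ∂m) atTop
        (nhds (∫ x, flim x * ξ x ∂m)) := h2 _ (hξm ξ)
    have h3 := hb.add (herr ξ)
    have h4 : (fun i => (∫ x, f i (S i x) * ξ x ∂m)
        + ∫ x, f i (S i x) * (ξ (S i x) - ξ x) ∂m)
        = fun i => ∫ x, f i x * ξ x ∂(μ i) := by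
      funext i; rw [hchg ξ i, hdecomp ξ i]
    rw [h4] at h3
    simpa using h3
end

section
/- In the setting of the previous lemma, fᵢ ∈ L²(mᵢ) converges L²-strongly to f ∈ L²(m) if and only if σᵢ(fᵢ) → f strongly (in norm) in L²(m). -/
open Filter Set MeasureTheory
open scoped ENNReal RealInnerProductSpace

set_option maxHeartbeats 2000000

section Aux

variable {Z : Type*} [MetricSpace Z] [MeasurableSpace Z] [BorelSpace Z]
  [TopologicalSpace.SeparableSpace Z]
  {m : Measure Z} [IsProbabilityMeasure m]

/-- Cost → 0 implies `S i → id` in measure. -/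
lemma aux_tendstoInMeasure (S : ℕ → Z → Z) (hSmeas : ∀ i, Measurable (S i))
    (hScost : Tendsto (fun i => ∫ x, (min 1 (dist x (S i x))) ^ 2 ∂m) atTop (nhds 0)) :
    TendstoInMeasure m (fun i x => S i x) atTop id := by
  haveI : SecondCountableTopology Z := UniformSpace.secondCountable_of_separable Z
  rw [tendstoInMeasure_iff_dist]
  intro ε hε
  set ε' : ℝ := min ε 1 with hε'def
  have hε' : 0 < ε' := lt_min hε one_pos
  have hε'1 : ε' ≤ 1 := min_le_right _ _
  have hmeasi : ∀ i, Measurable fun x => (min 1 (dist x (S i x))) ^ 2 := fun i =>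
    ((measurable_const.min (measurable_id.dist (hSmeas i))).pow_const 2)
  have hint : ∀ i, Integrable (fun x => (min 1 (dist x (S i x))) ^ 2) m := by
    intro i
    refine (MemLp.of_bound (hmeasi i).aestronglyMeasurable 1 (ae_of_all _ fun x => ?_)).integrable
      le_rfl
    have h0 : (0:ℝ) ≤ min 1 (dist x (S i x)) := le_min one_pos.le dist_nonneg
    have h1 : min 1 (dist x (S i x)) ≤ 1 := min_le_left _ _
    rw [Real.norm_eq_abs, abs_of_nonneg (by positivity)]
    nlinarith
  have hsub : ∀ i, m {x | ε ≤ dist (S i x) (id x)} ≤ m {x | ε' ^ 2 ≤ (min 1 (dist x (S i x))) ^ 2} := by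
    intro i
    apply measure_mono
    intro x hx
    simp only [mem_setOf_eq, id] at hx ⊢
    have : ε' ≤ min 1 (dist x (S i x)) := by
      rw [dist_comm] at hx
      exact le_min hε'1 (le_trans (min_le_left _ _) hx)
    have h0 : (0:ℝ) ≤ ε' := hε'.le
    nlinarith
  have hchev : ∀ i, (m {x | ε' ^ 2 ≤ (min 1 (dist x (S i x))) ^ 2}).toReal
      ≤ (∫ x, (min 1 (dist x (S i x))) ^ 2 ∂m) / ε' ^ 2 := by
    intro i
    rw [le_div_iff₀ (by positivity)]
    calc (m {x | ε' ^ 2 ≤ (min 1 (dist x (S i x))) ^ 2}).toReal * ε' ^ 2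
        = ε' ^ 2 * (m {x | ε' ^ 2 ≤ (min 1 (dist x (S i x))) ^ 2}).toReal := by ring
      _ ≤ ∫ x, (min 1 (dist x (S i x))) ^ 2 ∂m :=
        mul_meas_ge_le_integral_of_nonneg (ae_of_all _ fun x => by positivity) (hint i) _
  have htoReal : Tendsto (fun i => (m {x | ε ≤ dist (S i x) (id x)}).toReal) atTop (nhds 0) := by
    have hb := hScost.div_const (ε' ^ 2)
    rw [zero_div] at hb
    exact squeeze_zero (fun i => ENNReal.toReal_nonneg)
      (fun i => le_trans (ENNReal.toReal_mono (measure_ne_top _ _) (hsub i)) (hchev i)) hb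
  have hne : ∀ i, m {x | ε ≤ dist (S i x) (id x)} ≠ ∞ := fun i => measure_ne_top _ _
  have := (ENNReal.continuous_ofReal.tendsto 0).comp htoReal
  simp only [ENNReal.ofReal_zero] at this
  refine this.congr fun i => ?_
  rw [Function.comp_apply, ENNReal.ofReal_toReal (hne i)]


/-- `ξ ∘ S i → ξ` in `L²(m)` for bounded continuous `ξ`. -/
lemma aux_xi_tendsto (S : ℕ → Z → Z) (hSmeas : ∀ i, Measurable (S i))
    (hTIM : TendstoInMeasure m (fun i x => S i x) atTop id)
    (ξ : BoundedContinuousFunction Z ℝ) :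
    Tendsto (fun i => eLpNorm (fun x => ξ (S i x) - ξ x) 2 m) atTop (nhds 0) := by
  haveI : SecondCountableTopology Z := UniformSpace.secondCountable_of_separable Z
  have hmeasi : ∀ i, AEStronglyMeasurable (fun x => ξ (S i x)) m := fun i =>
    (ξ.continuous.measurable.comp (hSmeas i)).aestronglyMeasurable
  have hξmem : MemLp (fun x => ξ x) 2 m :=
    MemLp.of_bound ξ.continuous.measurable.aestronglyMeasurable ‖ξ‖
      (ae_of_all _ fun x => ξ.norm_coe_le_norm x)
  have hTIMξ : TendstoInMeasure m (fun i x => ξ (S i x)) atTop (fun x => ξ x) := by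
    intro ε hε
    refine tendsto_of_subseq_tendsto fun ns hns => ?_
    obtain ⟨ms, _, hae⟩ :=
      TendstoInMeasure.exists_seq_tendsto_ae (fun δ hδ => (hTIM δ hδ).comp hns)
    refine ⟨ms, ?_⟩
    have h2 : TendstoInMeasure m (fun k x => ξ (S (ns (ms k)) x)) atTop (fun x => ξ x) :=
      tendstoInMeasure_of_tendsto_ae (fun k => hmeasi _)
        (hae.mono fun x hx => (ξ.continuous.tendsto x).comp hx)
    exact h2 ε hε
  have hui : UnifIntegrable (fun i x => ξ (S i x)) 2 m := by
    refine unifIntegrable_of (by norm_num) (by norm_num) (fun i => hmeasi i) fun ε hε => ?_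
    refine ⟨‖ξ‖₊ + 1, fun i => ?_⟩
    have : {x | ‖ξ‖₊ + 1 ≤ ‖ξ (S i x)‖₊} = (∅ : Set Z) := by
      ext x
      simp only [mem_setOf_eq, mem_empty_iff_false, iff_false, not_le]
      exact lt_of_le_of_lt (ξ.nnnorm_coe_le_nnnorm _) (lt_add_one _)
    rw [this]
    simp [hε.le]
  have := tendsto_Lp_finite_of_tendstoInMeasure (μ := m) (p := 2) (by norm_num) (by norm_num)
    hmeasi hξmem hui hTIMξ
  exact this.congr fun i => by rfl

/-- Inner product in `L²` equals the integral of the product. -/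
lemma aux_inner_toLp {u v : Z → ℝ} (hu : MemLp u 2 m) (hv : MemLp v 2 m) :
    ⟪hu.toLp u, hv.toLp v⟫ = ∫ x, u x * v x ∂m := by
  rw [MeasureTheory.L2.inner_def]
  refine integral_congr_ae ?_
  filter_upwards [hu.coeFn_toLp, hv.coeFn_toLp] with x h1 h2
  rw [h1, h2, RCLike.inner_apply, conj_trivial, mul_comm]

end Aux

/-- Transfer of `L²`-strong convergence through the isometries `σᵢ(w) = w ∘ Sᵢ` induced by
almost-optimal transport maps `Sᵢ` pushing `m` to `mᵢ`: `fᵢ ∈ L²(mᵢ)` converges `L²`-strongly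
to `f ∈ L²(m)` (weak convergence of `fᵢmᵢ` to `fm` in duality with `Cb(Z)` together with
`limsup ‖fᵢ‖ ≤ ‖f‖`) if and only if `σᵢ(fᵢ) → f` in the norm of `L²(m)`. -/
theorem Lp_strong_convergence_iff_norm_in_L2
    {Z : Type*} [MetricSpace Z] [CompleteSpace Z] [TopologicalSpace.SeparableSpace Z]
    [MeasurableSpace Z] [BorelSpace Z]
    (μ : ℕ → Measure Z) (m : Measure Z)
    [∀ i, IsProbabilityMeasure (μ i)] [IsProbabilityMeasure m] [NullSingletonClass m]
    (hweak : ∀ ξ : BoundedContinuousFunction Z ℝ,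
      Tendsto (fun i => ∫ x, ξ x ∂(μ i)) atTop (nhds (∫ x, ξ x ∂m)))
    (S : ℕ → Z → Z) (hSmeas : ∀ i, Measurable (S i))
    (hSpush : ∀ i, Measure.map (S i) m = μ i)
    (hScost : Tendsto (fun i => ∫ x, (min 1 (dist x (S i x))) ^ 2 ∂m) atTop (nhds 0))
    (f : ℕ → Z → ℝ) (flim : Z → ℝ)
    (hfi : ∀ i, MemLp (f i) 2 (μ i)) (hflim : MemLp flim 2 m) :
    ((∃ C : ℝ≥0∞, C ≠ ⊤ ∧ ∀ i, eLpNorm (f i) 2 (μ i) ≤ C) ∧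
      (∀ ξ : BoundedContinuousFunction Z ℝ,
        Tendsto (fun i => ∫ x, f i x * ξ x ∂(μ i)) atTop (nhds (∫ x, flim x * ξ x ∂m))) ∧
      Filter.limsup (fun i => eLpNorm (f i) 2 (μ i)) atTop ≤ eLpNorm flim 2 m)
      ↔
    Tendsto (fun i => eLpNorm (fun x => f i (S i x) - flim x) 2 m) atTop (nhds 0) := by
  haveI : Fact ((1:ℝ≥0∞) ≤ 2) := ⟨one_le_two⟩
  have hmp : ∀ i, MeasurePreserving (S i) m (μ i) := fun i => ⟨hSmeas i, hSpush i⟩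
  have hg : ∀ i, MemLp (fun x => f i (S i x)) 2 m := fun i =>
    (hfi i).comp_measurePreserving (hmp i)
  have hnormeq : ∀ i, eLpNorm (fun x => f i (S i x)) 2 m = eLpNorm (f i) 2 (μ i) := fun i =>
    eLpNorm_comp_measurePreserving (hfi i).1 (hmp i)
  have hTIM := aux_tendstoInMeasure (m := m) S hSmeas hScost
  set G : ℕ → Lp ℝ 2 m := fun i => (hg i).toLp _ with hGdef
  set F : Lp ℝ 2 m := hflim.toLp flim with hFdef
  have hGnorm : ∀ i, ‖G i‖ = (eLpNorm (f i) 2 (μ i)).toReal := fun i => by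
    rw [hGdef, Lp.norm_toLp _ (hg i), hnormeq i]
  have hFnorm : ‖F‖ = (eLpNorm flim 2 m).toReal := Lp.norm_toLp _ hflim
  have hGFnorm : ∀ i, ‖G i - F‖ = (eLpNorm (fun x => f i (S i x) - flim x) 2 m).toReal := by
    intro i
    rw [hGdef, hFdef, ← MemLp.toLp_sub, Lp.norm_toLp]
    rfl
  -- the right-hand side is norm convergence `G i → F` in `L²(m)`
  have hRHS : Tendsto (fun i => eLpNorm (fun x => f i (S i x) - flim x) 2 m) atTop (nhds 0) ↔
      Tendsto G atTop (nhds F) := by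
    rw [tendsto_iff_norm_sub_tendsto_zero]
    constructor
    · intro h
      have h2 := (ENNReal.tendsto_toReal (a := 0) (by simp)).comp h
      simp only [Function.comp_def, ENNReal.toReal_zero] at h2
      exact h2.congr fun i => (hGFnorm i).symm
    · intro h
      have h2 := (ENNReal.continuous_ofReal.tendsto 0).comp h
      simp only [Function.comp_def, ENNReal.ofReal_zero] at h2
      refine h2.congr fun i => ?_
      rw [hGFnorm i, ENNReal.ofReal_toReal
        (show eLpNorm (fun x => f i (S i x) - flim x) 2 m ≠ ⊤ from ((hg i).sub hflim).2.ne)]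
  -- bounded continuous test functions in L²
  have hΞmem : ∀ ξ : BoundedContinuousFunction Z ℝ, MemLp (fun x => ξ x) 2 m := fun ξ =>
    MemLp.of_bound ξ.continuous.measurable.aestronglyMeasurable ‖ξ‖
      (ae_of_all _ fun x => ξ.norm_coe_le_norm x)
  have hΞimem : ∀ (i : ℕ) (ξ : BoundedContinuousFunction Z ℝ),
      MemLp (fun x => ξ (S i x)) 2 m := fun i ξ =>
    MemLp.of_bound (ξ.continuous.measurable.comp (hSmeas i)).aestronglyMeasurable ‖ξ‖
      (ae_of_all _ fun x => ξ.norm_coe_le_norm _)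
  have hIμ : ∀ (i : ℕ) (ξ : BoundedContinuousFunction Z ℝ),
      ∫ x, f i x * ξ x ∂(μ i) = ∫ x, f i (S i x) * ξ (S i x) ∂m := by
    intro i ξ
    rw [← hSpush i, integral_map (hSmeas i).aemeasurable]
    rw [hSpush i]
    exact (hfi i).1.mul ξ.continuous.measurable.aestronglyMeasurable
  have hinner1 : ∀ (i : ℕ) (ξ : BoundedContinuousFunction Z ℝ),
      ⟪G i, (hΞimem i ξ).toLp _⟫ = ∫ x, f i (S i x) * ξ (S i x) ∂m := fun i ξ =>
    aux_inner_toLp (hg i) (hΞimem i ξ)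
  have hinnerF : ∀ ξ : BoundedContinuousFunction Z ℝ,
      ⟪F, (hΞmem ξ).toLp _⟫ = ∫ x, flim x * ξ x ∂m := fun ξ =>
    aux_inner_toLp hflim (hΞmem ξ)
  have hΞnorm : ∀ (i : ℕ) (ξ : BoundedContinuousFunction Z ℝ),
      ‖(hΞimem i ξ).toLp _‖ ≤ ‖ξ‖ := by
    intro i ξ
    rw [Lp.norm_toLp]
    have h1 : eLpNorm (fun x => ξ (S i x)) 2 m ≤ ENNReal.ofReal ‖ξ‖ := by
      have := eLpNorm_le_of_ae_bound (μ := m) (p := 2) (f := fun x => ξ (S i x))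
        (C := ‖ξ‖) (ae_of_all _ fun x => ξ.norm_coe_le_norm _)
      simpa [measure_univ] using this
    exact le_trans (ENNReal.toReal_mono ENNReal.ofReal_ne_top h1)
      (by rw [ENNReal.toReal_ofReal (norm_nonneg _)])
  have hΞdiff : ∀ ξ : BoundedContinuousFunction Z ℝ,
      Tendsto (fun i => ‖(hΞimem i ξ).toLp _ - (hΞmem ξ).toLp _‖) atTop (nhds 0) := by
    intro ξ
    have h := aux_xi_tendsto (m := m) S hSmeas hTIM ξ
    have h2 := (ENNReal.tendsto_toReal (a := 0) (by simp)).comp h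
    simp only [Function.comp_def, ENNReal.toReal_zero] at h2
    refine h2.congr fun i => ?_
    exact (Lp.norm_toLp _ ((hΞimem i ξ).sub (hΞmem ξ))).symm
  have hΞtendsto : ∀ ξ : BoundedContinuousFunction Z ℝ,
      Tendsto (fun i => (hΞimem i ξ).toLp _) atTop (nhds ((hΞmem ξ).toLp _)) := by
    intro ξ
    rw [tendsto_iff_norm_sub_tendsto_zero]
    exact hΞdiff ξ
  rw [hRHS]
  constructor
  · rintro ⟨⟨C, hC, hCb⟩, hw, hls⟩
    have hGbdd : ∀ i, ‖G i‖ ≤ C.toReal := fun i => by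
      rw [hGnorm i]; exact ENNReal.toReal_mono hC (hCb i)
    -- weak convergence in L² against bounded continuous test functions
    have hweakL2 : ∀ ξ : BoundedContinuousFunction Z ℝ,
        Tendsto (fun i => ⟪G i, (hΞmem ξ).toLp _⟫) atTop (nhds ⟪F, (hΞmem ξ).toLp _⟫) := by
      intro ξ
      have h1 : Tendsto (fun i => ⟪G i, (hΞimem i ξ).toLp _⟫) atTop
          (nhds ⟪F, (hΞmem ξ).toLp _⟫) := by
        rw [hinnerF ξ]
        exact (hw ξ).congr fun i => by rw [hIμ i ξ, hinner1 i ξ]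
      have h2 : Tendsto (fun i => ⟪G i, (hΞmem ξ).toLp _ - (hΞimem i ξ).toLp _⟫) atTop
          (nhds 0) := by
        have hb : Tendsto (fun i => C.toReal * ‖(hΞimem i ξ).toLp _ - (hΞmem ξ).toLp _‖)
            atTop (nhds 0) := by
          have := (hΞdiff ξ).const_mul C.toReal
          simpa using this
        refine squeeze_zero_norm (fun i => ?_) hb
        calc ‖⟪G i, (hΞmem ξ).toLp _ - (hΞimem i ξ).toLp _⟫‖
            ≤ ‖G i‖ * ‖(hΞmem ξ).toLp _ - (hΞimem i ξ).toLp _‖ := norm_inner_le_norm _ _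
          _ ≤ C.toReal * ‖(hΞimem i ξ).toLp _ - (hΞmem ξ).toLp _‖ := by
              rw [norm_sub_rev]
              exact mul_le_mul_of_nonneg_right (hGbdd i) (norm_nonneg _)
      have h3 := h1.add h2
      rw [add_zero] at h3
      exact h3.congr fun i => by rw [← inner_add_right, add_sub_cancel]
    -- inner products with F converge to ‖F‖²
    have hinnerFF : Tendsto (fun i => ⟪G i, F⟫) atTop (nhds (‖F‖ ^ 2)) := by
      rw [Metric.tendsto_nhds]
      intro ε hε
      set δ : ℝ := ε / (C.toReal + ‖F‖ + 2) with hδdef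
      have hden : (0:ℝ) < C.toReal + ‖F‖ + 2 := by positivity
      have hδ : 0 < δ := div_pos hε hden
      obtain ⟨ξ, hξ1, hξ2⟩ := hflim.exists_boundedContinuous_eLpNorm_sub_le
        (μ := m) (by norm_num) (ε := ENNReal.ofReal (δ / 2)) (by simp only [ne_eq, ENNReal.ofReal_eq_zero, not_le]; linarith)
      have hFd : ‖F - (hΞmem ξ).toLp _‖ ≤ δ / 2 := by
        have heq : ‖F - (hΞmem ξ).toLp _‖ = (eLpNorm (flim - fun x => ξ x) 2 m).toReal :=
          Lp.norm_toLp _ (hflim.sub (hΞmem ξ))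
        rw [heq]
        refine le_trans (ENNReal.toReal_mono ENNReal.ofReal_ne_top hξ1) ?_
        rw [ENNReal.toReal_ofReal (by linarith)]
      filter_upwards [(hweakL2 ξ).eventually (Metric.ball_mem_nhds _ hδ)] with i hi
      replace hi : dist (⟪G i, (hΞmem ξ).toLp _⟫) (⟪F, (hΞmem ξ).toLp _⟫) < δ := hi
      have key : ⟪G i, F⟫ - ‖F‖ ^ 2 =
          ⟪G i, F - (hΞmem ξ).toLp _⟫ + (⟪G i, (hΞmem ξ).toLp _⟫ - ⟪F, (hΞmem ξ).toLp _⟫)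
            + ⟪F, (hΞmem ξ).toLp _ - F⟫ := by
        simp only [inner_sub_right]
        have : ⟪F, F⟫ = ‖F‖ ^ 2 := real_inner_self_eq_norm_sq F
        linarith [this]
      have e1 : ‖⟪G i, F - (hΞmem ξ).toLp _⟫‖ ≤ C.toReal * (δ / 2) :=
        le_trans (norm_inner_le_norm _ _)
          (mul_le_mul (hGbdd i) hFd (norm_nonneg _) ENNReal.toReal_nonneg)
      have e3 : ‖⟪F, (hΞmem ξ).toLp _ - F⟫‖ ≤ ‖F‖ * (δ / 2) := by
        refine le_trans (norm_inner_le_norm _ _) ?_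
        rw [norm_sub_rev]
        exact mul_le_mul_of_nonneg_left hFd (norm_nonneg _)
      have e2 : ‖⟪G i, (hΞmem ξ).toLp _⟫ - ⟪F, (hΞmem ξ).toLp _⟫‖ < δ := by
        rwa [Real.dist_eq] at hi
      rw [Real.dist_eq]
      have hCnn : (0:ℝ) ≤ C.toReal := ENNReal.toReal_nonneg
      have hδε : δ * (C.toReal + ‖F‖ + 2) = ε := by
        rw [hδdef]; field_simp
      have hFnn : (0:ℝ) ≤ ‖F‖ := norm_nonneg _
      rw [key]
      calc |⟪G i, F - (hΞmem ξ).toLp _⟫ + (⟪G i, (hΞmem ξ).toLp _⟫ - ⟪F, (hΞmem ξ).toLp _⟫)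
            + ⟪F, (hΞmem ξ).toLp _ - F⟫|
          ≤ |⟪G i, F - (hΞmem ξ).toLp _⟫| + |⟪G i, (hΞmem ξ).toLp _⟫ - ⟪F, (hΞmem ξ).toLp _⟫|
            + |⟪F, (hΞmem ξ).toLp _ - F⟫| := abs_add_three _ _ _
        _ < C.toReal * (δ / 2) + δ + ‖F‖ * (δ / 2) := by
            simp only [Real.norm_eq_abs] at e1 e2 e3
            linarith
        _ ≤ ε := by nlinarith
    -- eventual norm bound from the limsup hypothesis
    have hev : ∀ δ : ℝ, 0 < δ → ∀ᶠ i in atTop, ‖G i‖ ≤ ‖F‖ + δ := by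
      intro δ hδ
      have hlt : Filter.limsup (fun i => eLpNorm (f i) 2 (μ i)) atTop
          < eLpNorm flim 2 m + ENNReal.ofReal δ :=
        lt_of_le_of_lt hls (ENNReal.lt_add_right hflim.2.ne (by simpa using hδ))
      filter_upwards [Filter.eventually_lt_of_limsup_lt hlt] with i hi
      rw [hGnorm i, hFnorm]
      have := ENNReal.toReal_mono (ENNReal.add_ne_top.mpr ⟨hflim.2.ne, ENNReal.ofReal_ne_top⟩) hi.le
      rwa [ENNReal.toReal_add hflim.2.ne ENNReal.ofReal_ne_top,
        ENNReal.toReal_ofReal hδ.le] at this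
    -- conclude strong convergence
    rw [Metric.tendsto_nhds]
    intro ε hε
    set δ : ℝ := min 1 (ε ^ 2 / (2 * (2 * ‖F‖ + 3))) with hδdef
    have hδ : 0 < δ := lt_min one_pos (by positivity)
    have hδ1 : δ ≤ 1 := min_le_left _ _
    have hδ2 : δ ≤ ε ^ 2 / (2 * (2 * ‖F‖ + 3)) := min_le_right _ _
    filter_upwards [hev δ hδ, hinnerFF.eventually (eventually_gt_nhds
      (show ‖F‖ ^ 2 - δ < ‖F‖ ^ 2 by linarith))] with i h1 h2
    rw [dist_eq_norm]
    have hkey : ‖G i - F‖ ^ 2 = ‖G i‖ ^ 2 - 2 * ⟪G i, F⟫ + ‖F‖ ^ 2 :=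
      norm_sub_sq_real (G i) F
    have hFnn : (0:ℝ) ≤ ‖F‖ := norm_nonneg _
    have hGnn : (0:ℝ) ≤ ‖G i‖ := norm_nonneg _
    have hc : (0:ℝ) < 2 * (2 * ‖F‖ + 3) := by positivity
    have hδ3 : δ * (2 * (2 * ‖F‖ + 3)) ≤ ε ^ 2 := (le_div_iff₀ hc).mp hδ2
    have hsq1 : ‖G i‖ ^ 2 ≤ (‖F‖ + δ) ^ 2 := by nlinarith
    have hsq : ‖G i - F‖ ^ 2 < ε ^ 2 := by
      nlinarith [hsq1, h2, mul_le_mul_of_nonneg_left hδ1 hδ.le, hδ3, pow_pos hε 2]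
    exact lt_of_pow_lt_pow_left₀ 2 hε.le hsq
  · intro hconv
    have hGn : Tendsto (fun i => ‖G i‖) atTop (nhds ‖F‖) := hconv.norm
    have hnormconv : Tendsto (fun i => eLpNorm (f i) 2 (μ i)) atTop (nhds (eLpNorm flim 2 m)) := by
      have h2 := (ENNReal.continuous_ofReal.tendsto ‖F‖).comp hGn
      simp only [Function.comp_def] at h2
      have hl : ENNReal.ofReal ‖F‖ = eLpNorm flim 2 m := by
        rw [hFnorm, ENNReal.ofReal_toReal hflim.2.ne]
      rw [hl] at h2
      refine h2.congr fun i => ?_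
      rw [hGnorm i, ENNReal.ofReal_toReal (hfi i).2.ne]
    refine ⟨?_, ?_, ?_⟩
    · obtain ⟨R, hR⟩ := hGn.bddAbove_range
      refine ⟨ENNReal.ofReal R, ENNReal.ofReal_ne_top, fun i => ?_⟩
      rw [← ENNReal.ofReal_toReal (hfi i).2.ne, ← hGnorm i]
      exact ENNReal.ofReal_le_ofReal (hR ⟨i, rfl⟩)
    · intro ξ
      have h1 : Tendsto (fun i => ⟪G i, (hΞimem i ξ).toLp _⟫) atTop
          (nhds ⟪F, (hΞmem ξ).toLp _⟫) := hconv.inner (hΞtendsto ξ)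
      rw [hinnerF ξ] at h1
      exact h1.congr fun i => by rw [hinner1 i ξ, hIμ i ξ]
    · exact le_of_eq hnormconv.limsup_eq
end

section
/- Let H = L²(m) for a probability measure m, S its unit sphere, Ch the Cheeger energy (convex, lsc, 2-homogeneous), and suppose that for all s,t ≥ 0 the sets E^{s,t} = {u ∈ L²(m) : ‖u‖ ≤ s, Ch(u) ≤ t} are compact. Suppose moreover Ch(u) = 0 implies u is a.e. constant. Then for every T, M ≥ 0 the set E^{M,T} = {u ∈ S : Ch(u) ≤ M, |∂Φ|(u) ≤ T} is compact in L²(m), and every sequence (v_j) in it has a subsequence converging in L² to some v ∈ E^{M,T} with Ch(v_j) → Ch(v). -/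
open Filter Set MeasureTheory
open scoped ENNReal
set_option maxHeartbeats 1000000
set_option synthInstance.maxHeartbeats 400000

/-- The descending slope of a `[0,∞]`-valued functional:
`|∂Φ|(v) = limsup_{w→v} (Φ(v)-Φ(w))⁺ / ‖v-w‖` (with truncated subtraction). -/
noncomputable def slopeE {H : Type*} [NormedAddCommGroup H]
    (Φ : H → ℝ≥0∞) (v : H) : ℝ≥0∞ :=
  Filter.limsup (fun w => (Φ v - Φ w) / ENNReal.ofReal ‖v - w‖) (nhdsWithin v {v}ᶜ)

/-- Palais–Smale type compactness. Let `H = L²(m)` for a probability measure `m`, `Ch` a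
convex, lsc, `2`-homogeneous functional with compact sublevel sets, such that `Ch(u) = 0`
forces `u` to be a.e. constant, and let `Φ` be `Ch` restricted to `{‖u‖ ≤ 1, Ch(u) ≤ M'}`
(`+∞` outside), with `M' > M`. Then for all `T, M ≥ 0` the set
`E = {u ∈ S : Ch(u) ≤ M, |∂Φ|(u) ≤ T}` is compact, and every sequence in `E` has a
subsequence converging in `L²` to some `v ∈ E` with convergence of the energies. -/
theorem palais_smale_compactness
    {Ω : Type*} [MeasurableSpace Ω] (m : Measure Ω) [IsProbabilityMeasure m]
    (Ch : Lp ℝ 2 m → ℝ≥0∞)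
    (hconv : ∀ u v : Lp ℝ 2 m, ∀ t : ℝ, 0 ≤ t → t ≤ 1 →
      Ch (t • u + (1 - t) • v) ≤ ENNReal.ofReal t * Ch u + ENNReal.ofReal (1 - t) * Ch v)
    (hlsc : LowerSemicontinuous Ch)
    (hhom : ∀ (c : ℝ) (u : Lp ℝ 2 m), Ch (c • u) = ENNReal.ofReal (c ^ 2) * Ch u)
    (hcompact : ∀ s t : ℝ, 0 ≤ s → 0 ≤ t →
      IsCompact {u : Lp ℝ 2 m | ‖u‖ ≤ s ∧ Ch u ≤ ENNReal.ofReal t})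
    (hconst : ∀ u : Lp ℝ 2 m, Ch u = 0 → ∃ c : ℝ, (⇑u : Ω → ℝ) =ᵐ[m] fun _ => c)
    (M T M' : ℝ) (hM : 0 ≤ M) (hT : 0 ≤ T) (hM' : M < M')
    (Φ : Lp ℝ 2 m → ℝ≥0∞)
    (hΦ : ∀ v : Lp ℝ 2 m, Φ v =
      if ‖v‖ ≤ 1 ∧ Ch v ≤ ENNReal.ofReal M' then Ch v else ⊤) :
    IsCompact {u : Lp ℝ 2 m | ‖u‖ = 1 ∧ Ch u ≤ ENNReal.ofReal M ∧
        slopeE Φ u ≤ ENNReal.ofReal T} ∧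
      ∀ v : ℕ → Lp ℝ 2 m,
        (∀ j, ‖v j‖ = 1 ∧ Ch (v j) ≤ ENNReal.ofReal M ∧ slopeE Φ (v j) ≤ ENNReal.ofReal T) →
        ∃ φ : ℕ → ℕ, StrictMono φ ∧
          ∃ w : Lp ℝ 2 m,
            (‖w‖ = 1 ∧ Ch w ≤ ENNReal.ofReal M ∧ slopeE Φ w ≤ ENNReal.ofReal T) ∧
            Tendsto (fun j => v (φ j)) atTop (nhds w) ∧
            Tendsto (fun j => Ch (v (φ j))) atTop (nhds (Ch w)) := by
  have hPhi_eq : ∀ u : Lp ℝ 2 m, ‖u‖ ≤ 1 → Ch u ≤ ENNReal.ofReal M' → Φ u = Ch u := by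
    intro u h1 h2; rw [hΦ]; simp [h1, h2]
  have hMM' : ENNReal.ofReal M ≤ ENNReal.ofReal M' := ENNReal.ofReal_le_ofReal hM'.le
  have key : ∀ w v : Lp ℝ 2 m, ‖w‖ ≤ 1 → Ch w ≤ ENNReal.ofReal M' → ‖v‖ ≤ 1 →
      Ch v ≤ ENNReal.ofReal M' → Ch w ≤ Ch v + slopeE Φ w * ENNReal.ofReal ‖w - v‖ := by
    intro w v hw1 hw2 hv1 hv2
    have hPhi_eq : ∀ u : Lp ℝ 2 m, ‖u‖ ≤ 1 → Ch u ≤ ENNReal.ofReal M' → Φ u = Ch u := by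
      intro u h1 h2; rw [hΦ]; simp [h1, h2]
    rcases eq_or_ne w v with rfl | hne
    · exact le_add_right le_rfl
    have hd : (0:ℝ) < ‖w - v‖ := by
      rw [norm_pos_iff]; exact sub_ne_zero_of_ne hne
    have hwfin : Ch w ≠ ⊤ := ne_top_of_le_ne_top ENNReal.ofReal_ne_top hw2
    have hvfin : Ch v ≠ ⊤ := ne_top_of_le_ne_top ENNReal.ofReal_ne_top hv2
    set a := (Ch w).toReal with ha
    set b := (Ch v).toReal with hb
    have haw : Ch w = ENNReal.ofReal a := (ENNReal.ofReal_toReal hwfin).symm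
    have hbv : Ch v = ENNReal.ofReal b := (ENNReal.ofReal_toReal hvfin).symm
    have ha0 : 0 ≤ a := ENNReal.toReal_nonneg
    have hb0 : 0 ≤ b := ENNReal.toReal_nonneg
    have hK : ENNReal.ofReal ((a - b) / ‖w - v‖) ≤ slopeE Φ w := by
      set t : ℕ → ℝ := fun n => 1 / (n + 1) with htdef
      have ht0 : ∀ n, 0 < t n := fun n => by positivity
      have ht1 : ∀ n, t n ≤ 1 := by
        intro n
        rw [htdef, div_le_one (by positivity)]
        simp
      set g : ℕ → Lp ℝ 2 m := fun n => t n • v + (1 - t n) • w with hg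
      have hgnorm : ∀ n, ‖g n‖ ≤ 1 := by
        intro n
        calc ‖g n‖ ≤ ‖t n • v‖ + ‖(1 - t n) • w‖ := norm_add_le _ _
          _ = t n * ‖v‖ + (1 - t n) * ‖w‖ := by
              rw [norm_smul, norm_smul, Real.norm_eq_abs, Real.norm_eq_abs,
                abs_of_pos (ht0 n), abs_of_nonneg (by linarith [ht1 n])]
          _ ≤ t n * 1 + (1 - t n) * 1 :=
              add_le_add (mul_le_mul_of_nonneg_left hv1 (ht0 n).le)
                (mul_le_mul_of_nonneg_left hw1 (by linarith [ht1 n]))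
          _ = 1 := by ring
      have hgCh : ∀ n, Ch (g n) ≤ ENNReal.ofReal (t n * b + (1 - t n) * a) := by
        intro n
        calc Ch (g n) ≤ ENNReal.ofReal (t n) * Ch v + ENNReal.ofReal (1 - t n) * Ch w :=
              hconv v w (t n) (ht0 n).le (ht1 n)
          _ = ENNReal.ofReal (t n * b + (1 - t n) * a) := by
              rw [haw, hbv, ← ENNReal.ofReal_mul (ht0 n).le,
                ← ENNReal.ofReal_mul (by linarith [ht1 n]),
                ← ENNReal.ofReal_add (mul_nonneg (ht0 n).le hb0)
                  (mul_nonneg (by linarith [ht1 n]) ha0)]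
      have hgCh' : ∀ n, Ch (g n) ≤ ENNReal.ofReal M' := by
        intro n
        calc Ch (g n) ≤ ENNReal.ofReal (t n) * Ch v + ENNReal.ofReal (1 - t n) * Ch w :=
              hconv v w (t n) (ht0 n).le (ht1 n)
          _ ≤ ENNReal.ofReal (t n) * ENNReal.ofReal M' +
              ENNReal.ofReal (1 - t n) * ENNReal.ofReal M' := by gcongr
          _ = (ENNReal.ofReal (t n) + ENNReal.ofReal (1 - t n)) * ENNReal.ofReal M' :=
              (add_mul _ _ _).symm
          _ = ENNReal.ofReal M' := by
              rw [← ENNReal.ofReal_add (ht0 n).le (by linarith [ht1 n])]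
              norm_num
      have hgsub : ∀ n, g n - w = t n • (v - w) := by
        intro n
        rw [hg]
        module
      have hgne : ∀ n, g n ≠ w := by
        intro n h
        have h0 : t n • (v - w) = 0 := by rw [← hgsub n, h, sub_self]
        rcases smul_eq_zero.mp h0 with h' | h'
        · exact (ht0 n).ne' h'
        · exact hne (sub_eq_zero.mp h').symm
      have hgd : ∀ n, ‖w - g n‖ = t n * ‖w - v‖ := by
        intro n
        rw [← norm_neg, neg_sub, hgsub n, norm_smul, Real.norm_eq_abs, abs_of_pos (ht0 n),
          norm_sub_rev]
      have hΦg : ∀ n, Φ (g n) = Ch (g n) := fun n => hPhi_eq _ (hgnorm n) (hgCh' n)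
      have hΦw : Φ w = Ch w := hPhi_eq _ hw1 hw2
      have hbound : ∀ n, ENNReal.ofReal ((a - b) / ‖w - v‖) ≤
          (Φ w - Φ (g n)) / ENNReal.ofReal ‖w - g n‖ := by
        intro n
        rw [hΦg, hΦw, hgd]
        have h2 : ENNReal.ofReal (t n * (a - b)) ≤ Ch w - Ch (g n) := by
          calc ENNReal.ofReal (t n * (a - b))
              = ENNReal.ofReal a - ENNReal.ofReal (t n * b + (1 - t n) * a) := by
                rw [← ENNReal.ofReal_sub a (add_nonneg (mul_nonneg (ht0 n).le hb0) (mul_nonneg (by linarith [ht1 n]) ha0))]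
                ring_nf
            _ ≤ Ch w - Ch (g n) := by
                rw [haw]
                exact tsub_le_tsub_left (hgCh n) _
        calc ENNReal.ofReal ((a - b) / ‖w - v‖)
            = ENNReal.ofReal ((t n * (a - b)) / (t n * ‖w - v‖)) := by
              rw [mul_div_mul_left _ _ (ht0 n).ne']
          _ = ENNReal.ofReal (t n * (a - b)) / ENNReal.ofReal (t n * ‖w - v‖) :=
              ENNReal.ofReal_div_of_pos (mul_pos (ht0 n) hd)
          _ ≤ (Ch w - Ch (g n)) / ENNReal.ofReal (t n * ‖w - v‖) := by gcongr
      have hgt : Tendsto g atTop (nhdsWithin w {w}ᶜ) := by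
        rw [tendsto_nhdsWithin_iff]
        constructor
        · have htt : Tendsto t atTop (nhds (0:ℝ)) := tendsto_one_div_add_atTop_nhds_zero_nat
          have h1 : Tendsto (fun n => t n • v) atTop (nhds ((0:ℝ) • v)) := htt.smul_const v
          have h2 : Tendsto (fun n => (1 - t n) • w) atTop (nhds ((1 - 0 : ℝ) • w)) :=
            (tendsto_const_nhds.sub htt).smul_const w
          have := h1.add h2
          simpa using this
        · exact Eventually.of_forall fun n => hgne n
      calc ENNReal.ofReal ((a - b) / ‖w - v‖)
          ≤ limsup (fun n => (Φ w - Φ (g n)) / ENNReal.ofReal ‖w - g n‖) atTop :=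
            le_limsup_of_frequently_le ((Eventually.of_forall hbound).frequently)
        _ = limsup (fun u => (Φ w - Φ u) / ENNReal.ofReal ‖w - u‖) (map g atTop) := by
            rw [Filter.limsup, Filter.limsup, Filter.map_map]; rfl
        _ ≤ slopeE Φ w := limsup_le_limsup_of_le hgt
    have hK' : Ch w - Ch v ≤ slopeE Φ w * ENNReal.ofReal ‖w - v‖ := by
      rcases le_total a b with hab | hab
      · have hle : Ch w ≤ Ch v := by rw [haw, hbv]; exact ENNReal.ofReal_le_ofReal hab
        rw [tsub_eq_zero_of_le hle]; exact zero_le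
      · have : Ch w - Ch v = ENNReal.ofReal ((a - b) / ‖w - v‖) * ENNReal.ofReal ‖w - v‖ := by
          rw [← ENNReal.ofReal_mul (div_nonneg (sub_nonneg.mpr hab) hd.le),
            div_mul_cancel₀ _ hd.ne', haw, hbv, ENNReal.ofReal_sub _ hb0]
        rw [this]
        exact mul_le_mul_left hK _
    exact tsub_le_iff_left.mp hK'
  have main : ∀ vs : ℕ → Lp ℝ 2 m,
      (∀ j, ‖vs j‖ = 1 ∧ Ch (vs j) ≤ ENNReal.ofReal M ∧ slopeE Φ (vs j) ≤ ENNReal.ofReal T) →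
      ∀ w, Tendsto vs atTop (nhds w) →
      (‖w‖ = 1 ∧ Ch w ≤ ENNReal.ofReal M ∧ slopeE Φ w ≤ ENNReal.ofReal T) ∧
        Tendsto (fun j => Ch (vs j)) atTop (nhds (Ch w)) := by
    intro vs hvs w hvw
    have hnorm : ‖w‖ = 1 := by
      have h1 : Tendsto (fun j => ‖vs j‖) atTop (nhds ‖w‖) := hvw.norm
      have h2 : Tendsto (fun j => ‖vs j‖) atTop (nhds 1) := by
        have : (fun j => ‖vs j‖) = fun _ => (1:ℝ) := funext fun j => (hvs j).1
        rw [this]; exact tendsto_const_nhds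
      exact tendsto_nhds_unique h1 h2
    have hliminf : Ch w ≤ liminf (fun j => Ch (vs j)) atTop := by
      refine le_of_forall_lt_imp_le_of_dense ?_
      intro c hc
      have hev := hvw.eventually (hlsc w c hc)
      exact le_liminf_of_le (by isBoundedDefault) (hev.mono fun j hj => hj.le)
    have hChwM : Ch w ≤ ENNReal.ofReal M :=
      hliminf.trans (liminf_le_of_frequently_le'
        (Frequently.of_forall fun j => (hvs j).2.1))
    have hwM' : Ch w ≤ ENNReal.ofReal M' := hChwM.trans hMM'
    have hsub : ∀ (j : ℕ) (u : Lp ℝ 2 m), ‖u‖ ≤ 1 → Ch u ≤ ENNReal.ofReal M' →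
        Ch (vs j) ≤ Ch u + ENNReal.ofReal T * ENNReal.ofReal ‖vs j - u‖ := by
      intro j u h1 h2
      refine (key (vs j) u (hvs j).1.le ((hvs j).2.1.trans hMM') h1 h2).trans ?_
      gcongr
      exact (hvs j).2.2
    have htb : Tendsto (fun j => Ch w + ENNReal.ofReal T * ENNReal.ofReal ‖vs j - w‖)
        atTop (nhds (Ch w)) := by
      have h0 : Tendsto (fun j => ‖vs j - w‖) atTop (nhds 0) := by
        have := (hvw.sub (tendsto_const_nhds (x := w))).norm
        simpa using this
      have h1 : Tendsto (fun j => ENNReal.ofReal ‖vs j - w‖) atTop (nhds 0) := by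
        simpa using ENNReal.tendsto_ofReal h0
      have h2 : Tendsto (fun j => ENNReal.ofReal T * ENNReal.ofReal ‖vs j - w‖) atTop
          (nhds 0) := by
        simpa using ENNReal.Tendsto.const_mul h1 (Or.inr ENNReal.ofReal_ne_top)
      simpa using tendsto_const_nhds.add h2
    have hlimsup : limsup (fun j => Ch (vs j)) atTop ≤ Ch w := by
      refine le_trans (limsup_le_limsup
        (Eventually.of_forall fun j => hsub j w hnorm.le hwM')) ?_
      exact htb.limsup_eq.le
    have hCh : Tendsto (fun j => Ch (vs j)) atTop (nhds (Ch w)) :=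
      tendsto_of_le_liminf_of_limsup_le hliminf hlimsup
    have hslope : slopeE Φ w ≤ ENNReal.ofReal T := by
      refine limsup_le_of_le (by isBoundedDefault) ?_
      refine eventually_nhdsWithin_of_forall ?_
      intro u hu
      rcases eq_or_ne (Φ u) ⊤ with htop | htop
      · rw [htop, ENNReal.sub_top]
        simp
      · have hcond : ‖u‖ ≤ 1 ∧ Ch u ≤ ENNReal.ofReal M' := by
          by_contra h
          rw [hΦ u, if_neg h] at htop
          exact htop rfl
        have hΦu : Φ u = Ch u := by rw [hΦ u, if_pos hcond]
        have hlim : Ch w ≤ Ch u + ENNReal.ofReal T * ENNReal.ofReal ‖w - u‖ := by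
          refine le_of_tendsto_of_tendsto' hCh ?_ (fun j => hsub j u hcond.1 hcond.2)
          refine tendsto_const_nhds.add ?_
          refine ENNReal.Tendsto.const_mul ?_ (Or.inr ENNReal.ofReal_ne_top)
          exact ENNReal.tendsto_ofReal (hvw.sub (tendsto_const_nhds (x := u))).norm
        have hne' : u ≠ w := hu
        have hd : (0:ℝ) < ‖w - u‖ := by
          rw [norm_pos_iff]; exact sub_ne_zero_of_ne hne'.symm
        rw [hPhi_eq w hnorm.le hwM', hΦu,
          ENNReal.div_le_iff (ENNReal.ofReal_pos.mpr hd).ne' ENNReal.ofReal_ne_top]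
        exact tsub_le_iff_left.mpr hlim
    exact ⟨⟨hnorm, hChwM, hslope⟩, hCh⟩
  have hclosed : IsSeqClosed {u : Lp ℝ 2 m | ‖u‖ = 1 ∧ Ch u ≤ ENNReal.ofReal M ∧
      slopeE Φ u ≤ ENNReal.ofReal T} := fun vs w hmem hlim => (main vs hmem w hlim).1
  have hsubset : {u : Lp ℝ 2 m | ‖u‖ = 1 ∧ Ch u ≤ ENNReal.ofReal M ∧
      slopeE Φ u ≤ ENNReal.ofReal T} ⊆ {u : Lp ℝ 2 m | ‖u‖ ≤ 1 ∧ Ch u ≤ ENNReal.ofReal M} :=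
    fun u hu => ⟨hu.1.le, hu.2.1⟩
  refine ⟨(hcompact 1 M zero_le_one hM).of_isClosed_subset hclosed.isClosed hsubset, ?_⟩
  intro vs hvs
  have hmem : ∀ j, vs j ∈ {u : Lp ℝ 2 m | ‖u‖ ≤ 1 ∧ Ch u ≤ ENNReal.ofReal M} :=
    fun j => ⟨(hvs j).1.le, (hvs j).2.1⟩
  obtain ⟨w, -, φ, hφ, hlim⟩ := (hcompact 1 M zero_le_one hM).tendsto_subseq hmem
  have hlim' : Tendsto (fun j => vs (φ j)) atTop (nhds w) := hlim
  obtain ⟨hwE, hChlim⟩ := main (fun j => vs (φ j)) (fun j => hvs (φ j)) w hlim'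
  exact ⟨φ, hφ, w, hwE, hlim', hChlim⟩
end

section
/- Let H be a Hilbert space and Ch : H → [0,∞] a convex, lsc, 2-homogeneous functional whose sublevel sets {u : ‖u‖ ≤ s, Ch(u) ≤ t} are compact for all s,t ≥ 0. Define the Krasnoselskii eigenvalues λ_k(Ch) = inf over compact symmetric subsets V of the unit sphere with genus γ(V) ≥ k of sup_{u ∈ V} Ch(u). Then λ_k(Ch) → +∞ as k → ∞. -/
open Filter Set
open scoped ENNReal

/-- The Krasnoselskii genus of a subset `V` of a normed space. -/
noncomputable def genus {W : Type*} [NormedAddCommGroup W] [NormedSpace ℝ W]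
    (V : Set W) : ℕ∞ :=
  sInf {m : ℕ∞ | ∃ n : ℕ, m = (n : ℕ∞) ∧
    ∃ h : V → (Fin n → ℝ), Continuous h ∧
      (∀ x y : V, (y : W) = -(x : W) → h y = -h x) ∧ ∀ x : V, h x ≠ 0}

/-- The `k`-th Krasnoselskii eigenvalue of `Ch`: the infimum over compact symmetric subsets
`V` of the unit sphere with genus at least `k` of `sup_{u ∈ V} Ch(u)`. -/
noncomputable def krasnoselskii {H : Type*} [NormedAddCommGroup H] [NormedSpace ℝ H]
    (Ch : H → ℝ≥0∞) (k : ℕ) : ℝ≥0∞ :=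
  ⨅ (V : Set H) (_ : IsCompact V ∧ (∀ x ∈ V, -x ∈ V) ∧ (∀ u ∈ V, ‖u‖ = 1) ∧
      (k : ℕ∞) ≤ genus V), ⨆ u ∈ V, Ch u

/-- Genus is monotone with respect to inclusion. -/
lemma genus_mono {W : Type*} [NormedAddCommGroup W] [NormedSpace ℝ W]
    {V K : Set W} (hVK : V ⊆ K) : genus V ≤ genus K := by
  apply sInf_le_sInf
  rintro m ⟨n, rfl, h, hcont, hodd, hne⟩
  exact ⟨n, rfl, h ∘ Set.inclusion hVK, hcont.comp (continuous_inclusion hVK),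
    fun x y hxy => hodd (Set.inclusion hVK x) (Set.inclusion hVK y) hxy,
    fun x => hne _⟩

/-- A compact symmetric set not containing the origin has finite genus. -/
lemma genus_le_of_compact {W : Type*} [NormedAddCommGroup W] [InnerProductSpace ℝ W]
    {K : Set W} (hK : IsCompact K) (h0 : (0:W) ∉ K) : ∃ n : ℕ, genus K ≤ (n : ℕ∞) := by
  have hcov : K ⊆ ⋃ x : K, {z : W | inner ℝ z (x : W) ≠ (0:ℝ)} := by
    intro y hy
    refine Set.mem_iUnion.mpr ⟨⟨y, hy⟩, ?_⟩
    have hy0 : y ≠ 0 := fun h => h0 (h ▸ hy)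
    simpa using (inner_self_ne_zero (𝕜 := ℝ)).mpr hy0
  obtain ⟨t, ht⟩ := hK.elim_finite_subcover
    (fun x : K => {z : W | inner ℝ z (x : W) ≠ (0:ℝ)})
    (fun x => isOpen_compl_iff.mpr (isClosed_eq (continuous_id.inner continuous_const)
      continuous_const)) hcov
  refine ⟨t.card, ?_⟩
  apply sInf_le
  refine ⟨t.card, rfl, fun y i => inner ℝ (y : W) ((t.equivFin.symm i : K) : W), ?_, ?_, ?_⟩
  · exact continuous_pi fun i => continuous_subtype_val.inner continuous_const
  · intro x y hxy
    funext i
    simp [hxy, inner_neg_left]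
  · intro y hcontra
    obtain ⟨x, hxt, hxU⟩ := Set.mem_iUnion₂.mp (ht y.2)
    apply hxU
    have := congrFun hcontra (t.equivFin ⟨x, hxt⟩)
    simpa using this

/-- If `Ch` is convex, lsc and `2`-homogeneous on a Hilbert space, with compact sublevel sets
`{‖u‖ ≤ s, Ch(u) ≤ t}`, then the Krasnoselskii eigenvalues `λ_k(Ch)` diverge to `+∞`. -/
theorem krasnoselskii_tendsto_top
    {H : Type*} [NormedAddCommGroup H] [InnerProductSpace ℝ H] [CompleteSpace H]
    (Ch : H → ℝ≥0∞)
    (hconv : ∀ u v : H, ∀ t : ℝ, 0 ≤ t → t ≤ 1 →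
      Ch (t • u + (1 - t) • v) ≤ ENNReal.ofReal t * Ch u + ENNReal.ofReal (1 - t) * Ch v)
    (hlsc : LowerSemicontinuous Ch)
    (hhom : ∀ (c : ℝ) (u : H), Ch (c • u) = ENNReal.ofReal (c ^ 2) * Ch u)
    (hcompact : ∀ s t : ℝ, 0 ≤ s → 0 ≤ t →
      IsCompact {u : H | ‖u‖ ≤ s ∧ Ch u ≤ ENNReal.ofReal t}) :
    Tendsto (fun k => krasnoselskii Ch k) atTop (nhds ⊤) := by
  apply ENNReal.tendsto_nhds_top
  intro n
  have hmono : Monotone (krasnoselskii Ch) := by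
    intro a b hab
    refine le_iInf fun V => le_iInf fun hV => ?_
    exact iInf₂_le V ⟨hV.1, hV.2.1, hV.2.2.1,
      le_trans (by exact_mod_cast hab) hV.2.2.2⟩
  suffices h : ∃ k, (n : ℝ≥0∞) < krasnoselskii Ch k by
    obtain ⟨k, hk⟩ := h
    filter_upwards [eventually_ge_atTop k] with m hm
    exact lt_of_lt_of_le hk (hmono hm)
  by_contra hcon
  push_neg at hcon
  -- the compact sublevel set intersected with the unit sphere
  have hsphere : IsClosed {u : H | ‖u‖ = 1} :=
    isClosed_eq continuous_norm continuous_const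
  set K := {u : H | ‖u‖ ≤ 1 ∧ Ch u ≤ ENNReal.ofReal ((n:ℝ)+1)} ∩ {u : H | ‖u‖ = 1} with hKdef
  have hKcomp : IsCompact K :=
    (hcompact 1 ((n:ℝ)+1) zero_le_one (by positivity)).inter_right hsphere
  have h0K : (0:H) ∉ K := by
    intro h
    have := h.2
    simp at this
  obtain ⟨N, hN⟩ := genus_le_of_compact hKcomp h0K
  have hk := hcon (N+1)
  have hlt : krasnoselskii Ch (N+1) < (n : ℝ≥0∞) + 1 :=
    lt_of_le_of_lt hk (ENNReal.lt_add_right (by simp) one_ne_zero)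
  rw [krasnoselskii, iInf_lt_iff] at hlt
  obtain ⟨V, hVlt⟩ := hlt
  rw [iInf_lt_iff] at hVlt
  obtain ⟨hP, hSlt⟩ := hVlt
  have hcast : ENNReal.ofReal ((n:ℝ)+1) = (n : ℝ≥0∞) + 1 := by
    rw [ENNReal.ofReal_add (by positivity) zero_le_one]
    simp
  have hVK : V ⊆ K := by
    intro u hu
    refine ⟨⟨le_of_eq (hP.2.2.1 u hu), ?_⟩, hP.2.2.1 u hu⟩
    rw [hcast]
    exact le_of_lt (lt_of_le_of_lt (le_iSup₂ (f := fun u _ => Ch u) u hu) hSlt)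
  have h1 : ((N+1 : ℕ) : ℕ∞) ≤ genus V := hP.2.2.2
  have h2 : genus V ≤ (N : ℕ∞) := le_trans (genus_mono hVK) hN
  have : (N+1 : ℕ) ≤ N := by exact_mod_cast le_trans h1 h2
  omega
end
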